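/- arXiv:2401.14824 — 2 statements merged into one kernel-verified Lean document; each statement's English description precedes it below -/
import Mathlib

section
/- Let θ : ℝ³ → ℝ³ be twice continuously differentiable and u : ℝ³ → ℝ³ be continuously differentiable, and set w = (I + Dθᵀ)(u ∘ (id + θ)), i.e. w(x) = (I + Dθ(x)ᵀ) u(x + θ(x)). Then for every x ∈ ℝ³, the skew-symmetric part of the Jacobian of w satisfies Dw(x) − Dw(x)ᵀ = (I + Dθ(x)ᵀ)(Du(x + θ(x)) − Du(x + θ(x))ᵀ)(I + Dθ(x)). -/
open Matrix

/-- Jacobian matrix of a vector field on ℝ³ in Cartesian coordinates. -/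
noncomputable def jacobian (v : (Fin 3 → ℝ) → (Fin 3 → ℝ)) (x : Fin 3 → ℝ) :
    Matrix (Fin 3) (Fin 3) ℝ :=
  Matrix.of fun i j => fderiv ℝ v x (Pi.single j 1) i

/-!
With `φ = id + θ` and `α` the 1-form `z ↦ u(z) ⬝ᵥ ·`, the field `w` represents the pullback
`φ*α = α(φ y) ∘ Dφ(y)`, and the claim is that the exterior derivative commutes with pullback.
By the product and chain rules, `D(φ*α)(x)(v, w) = Dα(φ x)(Dφ v, Dφ w) + α(φ x)(D²φ(x)(v, w))`;
the second term is symmetric in `v, w` by Schwarz's theorem (this is where `θ ∈ C²` enters),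
so it cancels from `Dw - Dwᵀ`, and what is left is `(I + Dθ)ᵀ (Du - Duᵀ)(I + Dθ)`.
-/

section Pullback

variable {E F G : Type*} [NormedAddCommGroup E] [NormedSpace ℝ E]
  [NormedAddCommGroup F] [NormedSpace ℝ F] [NormedAddCommGroup G] [NormedSpace ℝ G]

noncomputable def pullback (φ : E → F) (α : F → F →L[ℝ] G) (y : E) : E →L[ℝ] G :=
  (α (φ y)).comp (fderiv ℝ φ y)

variable {φ : E → F} {α : F → F →L[ℝ] G} {x : E}

theorem differentiableAt_pullback (hφ : ContDiffAt ℝ 2 φ x)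
    (hα : DifferentiableAt ℝ α (φ x)) : DifferentiableAt ℝ (pullback φ α) x :=
  (hα.comp x (hφ.differentiableAt two_ne_zero)).clm_comp
    ((hφ.fderiv_right (m := 1) le_rfl).differentiableAt one_ne_zero)

theorem fderiv_pullback_apply (hφ : ContDiffAt ℝ 2 φ x) (hα : DifferentiableAt ℝ α (φ x))
    (v w : E) :
    fderiv ℝ (pullback φ α) x v w
      = fderiv ℝ α (φ x) (fderiv ℝ φ x v) (fderiv ℝ φ x w)
        + α (φ x) (fderiv ℝ (fderiv ℝ φ) x v w) := by
  have hφ₁ : DifferentiableAt ℝ φ x := hφ.differentiableAt two_ne_zero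
  have hφ₂ : DifferentiableAt ℝ (fderiv ℝ φ) x :=
    (hφ.fderiv_right (m := 1) le_rfl).differentiableAt one_ne_zero
  unfold pullback
  rw [fderiv_clm_comp (c := fun y => α (φ y)) (hα.comp x hφ₁) hφ₂,
    fderiv_fun_comp x hα hφ₁]
  simp [add_comm]

theorem fderiv_pullback_sub_swap (hφ : ContDiffAt ℝ 2 φ x) (hα : DifferentiableAt ℝ α (φ x))
    (v w : E) :
    fderiv ℝ (pullback φ α) x v w - fderiv ℝ (pullback φ α) x w v
      = fderiv ℝ α (φ x) (fderiv ℝ φ x v) (fderiv ℝ φ x w)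
        - fderiv ℝ α (φ x) (fderiv ℝ φ x w) (fderiv ℝ φ x v) := by
  rw [fderiv_pullback_apply hφ hα, fderiv_pullback_apply hφ hα,
    (hφ.isSymmSndFDerivAt (by simp)).eq v w]
  abel

end Pullback

section DotProduct

noncomputable def dotProductL (ι : Type*) [Fintype ι] : (ι → ℝ) →L[ℝ] (ι → ℝ) →L[ℝ] ℝ :=
  LinearMap.toContinuousLinearMap
    (LinearMap.toContinuousLinearMap.toLinearMap ∘ₗ dotProductBilin ℝ ℝ)

variable {ι : Type*} [Fintype ι]

@[simp]
theorem dotProductL_apply (a b : ι → ℝ) : dotProductL ι a b = a ⬝ᵥ b :=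
  rfl

theorem fderiv_dotProductL_comp_apply {E : Type*} [NormedAddCommGroup E] [NormedSpace ℝ E]
    {u : E → ι → ℝ} {z : E} (hu : DifferentiableAt ℝ u z) (a : E) (b : ι → ℝ) :
    fderiv ℝ (fun z => dotProductL ι (u z)) z a b = fderiv ℝ u z a ⬝ᵥ b := by
  rw [fderiv_fun_comp z (dotProductL ι).differentiableAt hu, ContinuousLinearMap.fderiv]
  rfl

variable {R : Type*} [DecidableEq ι]

theorem transpose_mulVec_apply [CommSemiring R] (A : Matrix ι ι R) (c : ι → R) (i : ι) :
    (Aᵀ *ᵥ c) i = c ⬝ᵥ (A *ᵥ Pi.single i 1) := by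
  rw [mulVec_transpose, mulVec_single_one]
  rfl

theorem transpose_mul_sub_transpose_mul_apply [CommRing R] (A M : Matrix ι ι R) (i j : ι) :
    (Aᵀ * (M - Mᵀ) * A) i j
      = (M *ᵥ (A *ᵥ Pi.single j 1)) ⬝ᵥ (A *ᵥ Pi.single i 1)
        - (M *ᵥ (A *ᵥ Pi.single i 1)) ⬝ᵥ (A *ᵥ Pi.single j 1) := by
  have hij : (Aᵀ * (M - Mᵀ) * A) i j = (Aᵀ *ᵥ ((M - Mᵀ) *ᵥ (A *ᵥ Pi.single j 1))) i := by
    rw [mulVec_mulVec, mulVec_mulVec, mulVec_single_one]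
    rfl
  rw [hij, transpose_mulVec_apply, sub_mulVec, sub_dotProduct, mulVec_transpose,
    ← dotProduct_mulVec, dotProduct_comm (A *ᵥ _)]

end DotProduct

section Jacobian

theorem jacobian_mulVec (v : (Fin 3 → ℝ) → (Fin 3 → ℝ)) (x a : Fin 3 → ℝ) :
    jacobian v x *ᵥ a = fderiv ℝ v x a :=
  LinearMap.toMatrix'_mulVec (fderiv ℝ v x : (Fin 3 → ℝ) →ₗ[ℝ] (Fin 3 → ℝ)) a

theorem jacobian_id_add {θ : (Fin 3 → ℝ) → (Fin 3 → ℝ)} {x : Fin 3 → ℝ}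
    (hθ : DifferentiableAt ℝ θ x) : jacobian (fun y => y + θ y) x = 1 + jacobian θ x := by
  have hφ : HasFDerivAt (fun y => y + θ y) (ContinuousLinearMap.id ℝ _ + fderiv ℝ θ x) x :=
    (hasFDerivAt_id x).add hθ.hasFDerivAt
  ext i j
  simp [jacobian, hφ.fderiv, Pi.single_apply, one_apply]

theorem jacobian_apply_of_apply_single {w : (Fin 3 → ℝ) → (Fin 3 → ℝ)}
    {β : (Fin 3 → ℝ) → (Fin 3 → ℝ) →L[ℝ] ℝ} {x : Fin 3 → ℝ} (hβ : DifferentiableAt ℝ β x)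
    (hw : ∀ y i, w y i = β y (Pi.single i 1)) (i j : Fin 3) :
    jacobian w x i j = fderiv ℝ β x (Pi.single j 1) (Pi.single i 1) := by
  have hwβ : w = (ContinuousLinearMap.pi fun i =>
      ContinuousLinearMap.apply ℝ ℝ (Pi.single i 1)) ∘ β := by
    funext y i
    exact hw y i
  subst hwβ
  rw [jacobian, of_apply, fderiv_comp x (ContinuousLinearMap.differentiableAt _) hβ,
    ContinuousLinearMap.fderiv]
  rfl

end Jacobian

theorem stmt_6 (θ u : (Fin 3 → ℝ) → (Fin 3 → ℝ))
    (hθ : ContDiff ℝ 2 θ) (hu : ContDiff ℝ 1 u)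
    (w : (Fin 3 → ℝ) → (Fin 3 → ℝ))
    (hw : ∀ y, w y = ((1 : Matrix (Fin 3) (Fin 3) ℝ) + (jacobian θ y)ᵀ) *ᵥ u (y + θ y))
    (x : Fin 3 → ℝ) :
    jacobian w x - (jacobian w x)ᵀ
      = ((1 : Matrix (Fin 3) (Fin 3) ℝ) + (jacobian θ x)ᵀ)
          * (jacobian u (x + θ x) - (jacobian u (x + θ x))ᵀ)
          * ((1 : Matrix (Fin 3) (Fin 3) ℝ) + jacobian θ x) := by
  set φ : (Fin 3 → ℝ) → (Fin 3 → ℝ) := fun y => y + θ y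
  set α : (Fin 3 → ℝ) → (Fin 3 → ℝ) →L[ℝ] ℝ := fun z => dotProductL (Fin 3) (u z)
  have hφ : ContDiff ℝ 2 φ := contDiff_id.add hθ
  have hud : Differentiable ℝ u := hu.differentiable one_ne_zero
  have hα : Differentiable ℝ α := (dotProductL (Fin 3)).differentiable.comp hud
  have hJφ (y : Fin 3 → ℝ) : jacobian φ y = 1 + jacobian θ y :=
    jacobian_id_add (hθ.differentiable two_ne_zero y)
  have hJφT (y : Fin 3 → ℝ) : (jacobian φ y)ᵀ = 1 + (jacobian θ y)ᵀ := by
    rw [hJφ, transpose_add, transpose_one]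
  have hwα (y : Fin 3 → ℝ) (i : Fin 3) : w y i = pullback φ α y (Pi.single i 1) := by
    rw [hw, ← hJφT, transpose_mulVec_apply, jacobian_mulVec]
    rfl
  have hβ := differentiableAt_pullback hφ.contDiffAt (hα (φ x))
  ext i j
  rw [Matrix.sub_apply, transpose_apply, jacobian_apply_of_apply_single hβ hwα,
    jacobian_apply_of_apply_single hβ hwα, fderiv_pullback_sub_swap hφ.contDiffAt (hα _),
    ← hJφT, ← hJφ, transpose_mul_sub_transpose_mul_apply]
  simp only [fderiv_dotProductL_comp_apply (hud _), jacobian_mulVec, α]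
  rfl
end

section
/- (Piola identity.) Let φ : ℝ³ → ℝ³ be twice continuously differentiable and let cof Dφ = (adj Dφ)ᵀ denote the cofactor matrix of its Jacobian. Then each row of the cofactor matrix is divergence free: for every x ∈ ℝ³ and each i ∈ {1,2,3}, Σ_{j=1}^{3} ∂_j (cof Dφ(x))_{ij} = 0. -/
/-!
With indices mod 3, row `i` of `cof Dφ` is the cross product `∇φ_{i+1} × ∇φ_{i+2}`, and
`div (u × w) = w · curl u - u · curl w`. Gradients are curl free because second derivatives
commute (Schwarz), so both terms vanish.
-/

open Matrix

/-- Cofactor matrix of a 3×3 matrix: the transpose of the adjugate. -/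
def cof (M : Matrix (Fin 3) (Fin 3) ℝ) : Matrix (Fin 3) (Fin 3) ℝ :=
  (M.adjugate)ᵀ

theorem cof_apply (M : Matrix (Fin 3) (Fin 3) ℝ) (i j : Fin 3) :
    cof M i j =
      M (i + 1) (j + 1) * M (i + 2) (j + 2) - M (i + 1) (j + 2) * M (i + 2) (j + 1) := by
  fin_cases i <;> fin_cases j <;> simp [cof, adjugate_fin_three] <;> ring

/-- After reindexing, the sum is `∑ k, v k * (H (k + 2) (k + 1) - H (k + 1) (k + 2))`: `v` dotted
with the curl of a field whose derivative matrix is `H`. -/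
theorem sum_cyclic_mul_sub_eq_zero_of_symm {R : Type*} [CommRing R] (H : Fin 3 → Fin 3 → R)
    (hH : ∀ b c, H b c = H c b) (v : Fin 3 → R) :
    ∑ j, (H (j + 1) j * v (j + 2) - H (j + 2) j * v (j + 1)) = 0 := by
  simp only [Fin.sum_univ_three, Fin.isValue, zero_add, Fin.reduceAdd]
  rw [hH 1 0, hH 2 0, hH 2 1]
  ring

/-- `secondPartial φ x a b c = ∂_c ∂_b φ_a (x)`. -/
noncomputable def secondPartial {n : ℕ} (φ : (Fin n → ℝ) → (Fin n → ℝ)) (x : Fin n → ℝ)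
    (a b c : Fin n) : ℝ :=
  fderiv ℝ (fderiv ℝ φ) x (Pi.single c 1) (Pi.single b 1) a

theorem secondPartial_comm {n : ℕ} {φ : (Fin n → ℝ) → (Fin n → ℝ)} {x : Fin n → ℝ}
    (hφ : ContDiffAt ℝ 2 φ x) (a b c : Fin n) :
    secondPartial φ x a b c = secondPartial φ x a c b := by
  rw [secondPartial, secondPartial, hφ.isSymmSndFDerivAt (by simp)]

theorem hasFDerivAt_jacobian_apply {φ : (Fin 3 → ℝ) → (Fin 3 → ℝ)} {x : Fin 3 → ℝ}
    (h : DifferentiableAt ℝ (fderiv ℝ φ) x) (a b : Fin 3) :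
    HasFDerivAt (fun y => jacobian φ y a b)
      ((ContinuousLinearMap.proj (R := ℝ) a ∘L
        ContinuousLinearMap.apply ℝ (Fin 3 → ℝ) (Pi.single b 1)) ∘L fderiv ℝ (fderiv ℝ φ) x) x :=
  let L := ContinuousLinearMap.proj (R := ℝ) a ∘L
    ContinuousLinearMap.apply ℝ (Fin 3 → ℝ) (Pi.single b 1)
  HasFDerivAt.comp (g := L) x L.hasFDerivAt h.hasFDerivAt

theorem fderiv_cof_jacobian_apply {φ : (Fin 3 → ℝ) → (Fin 3 → ℝ)} {x : Fin 3 → ℝ}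
    (h : DifferentiableAt ℝ (fderiv ℝ φ) x) (i j c : Fin 3) :
    fderiv ℝ (fun y => cof (jacobian φ y) i j) x (Pi.single c 1) =
      secondPartial φ x (i + 1) (j + 1) c * jacobian φ x (i + 2) (j + 2)
        + jacobian φ x (i + 1) (j + 1) * secondPartial φ x (i + 2) (j + 2) c
        - (secondPartial φ x (i + 1) (j + 2) c * jacobian φ x (i + 2) (j + 1)
          + jacobian φ x (i + 1) (j + 2) * secondPartial φ x (i + 2) (j + 1) c) := by
  have hJ := hasFDerivAt_jacobian_apply h
  have hcof : (fun y => cof (jacobian φ y) i j) =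
      (fun y => jacobian φ y (i + 1) (j + 1)) * (fun y => jacobian φ y (i + 2) (j + 2))
        - (fun y => jacobian φ y (i + 1) (j + 2)) * (fun y => jacobian φ y (i + 2) (j + 1)) :=
    funext fun y => cof_apply _ i j
  rw [hcof, (((hJ _ _).mul (hJ _ _)).sub ((hJ _ _).mul (hJ _ _))).fderiv]
  simp only [_root_.sub_apply, _root_.add_apply, _root_.smul_apply, ContinuousLinearMap.comp_apply,
    ContinuousLinearMap.apply_apply, ContinuousLinearMap.proj_apply, smul_eq_mul, secondPartial]
  ring

/-- Piola identity: each row of the cofactor matrix of the Jacobian of a C² map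
is divergence free. -/
theorem stmt_8 (φ : (Fin 3 → ℝ) → (Fin 3 → ℝ)) (hφ : ContDiff ℝ 2 φ)
    (x : Fin 3 → ℝ) (i : Fin 3) :
    ∑ j : Fin 3, fderiv ℝ (fun y => cof (jacobian φ y) i j) x (Pi.single j 1) = 0 := by
  have hd : DifferentiableAt ℝ (fderiv ℝ φ) x :=
    (hφ.fderiv_right (m := 1) le_rfl).differentiable one_ne_zero x
  have hsymm := secondPartial_comm (hφ.contDiffAt (x := x))
  calc ∑ j, fderiv ℝ (fun y => cof (jacobian φ y) i j) x (Pi.single j 1)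
      = ∑ j, (secondPartial φ x (i + 1) (j + 1) j * jacobian φ x (i + 2) (j + 2)
            - secondPartial φ x (i + 1) (j + 2) j * jacobian φ x (i + 2) (j + 1))
        - ∑ j, (secondPartial φ x (i + 2) (j + 1) j * jacobian φ x (i + 1) (j + 2)
            - secondPartial φ x (i + 2) (j + 2) j * jacobian φ x (i + 1) (j + 1)) := by
        rw [← Finset.sum_sub_distrib]
        refine Finset.sum_congr rfl fun j _ => ?_
        rw [fderiv_cof_jacobian_apply hd]
        ring
    _ = 0 := by
        rw [sum_cyclic_mul_sub_eq_zero_of_symm _ (hsymm (i + 1)),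
          sum_cyclic_mul_sub_eq_zero_of_symm _ (hsymm (i + 2)), sub_zero]
end
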